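/- arXiv:2509.10351 — 3 statements merged into one kernel-verified Lean document; each statement's English description precedes it below -/
import Mathlib

section
/- Let u be an unbounded, upper semicontinuous utility function that is negatively star-shaped on ℝ₊, and let R be a risk functional that is cash-convex and satisfies the lower Fatou property. If ALG(u) > -∞ and R is not sensitive to large losses, then there exists a normalized market model S̄ such that for every initial wealth w ∈ (0,∞) there is a sequence of portfolios (θ_n)_{n≥1} ⊂ ℝ^{1+d} satisfying θ_n·S̄₀ = w and R(θ_n·S̄₁) ≤ R(w(1+r)) for all n, and E[u(θ_n·S̄₁)] → u(∞). -/
open MeasureTheory Filter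
open scoped ENNReal

namespace URPaper

variable {Ω : Type*} [MeasurableSpace Ω]

/-- The payoff `π · X` of the portfolio `π` in the market `X`. -/
def port {d : ℕ} (X : Fin d → Ω → ℝ) (π : Fin d → ℝ) : Ω → ℝ :=
  fun ω => ∑ i, π i * X i ω

/-- The scaled position `l • Y`. -/
def scale (l : ℝ) (Y : Ω → ℝ) : Ω → ℝ := fun ω => l * Y ω

/-- A functional is increasing (with respect to the a.s. order on `L¹`). -/
def MonoInc (μ : Measure Ω) (U : (Ω → ℝ) → EReal) : Prop :=
  ∀ Y Z : Ω → ℝ, Integrable Y μ → Integrable Z μ →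
    (∀ᵐ ω ∂μ, Y ω ≤ Z ω) → U Y ≤ U Z

/-- A functional is decreasing (with respect to the a.s. order on `L¹`). -/
def MonoDec (μ : Measure Ω) (R : (Ω → ℝ) → EReal) : Prop :=
  ∀ Y Z : Ω → ℝ, Integrable Y μ → Integrable Z μ →
    (∀ᵐ ω ∂μ, Y ω ≤ Z ω) → R Z ≤ R Y

/-- `U(∞)`: the limit of `U` along deterministic constants `y → ∞`
(equal to the supremum, since `U` is increasing along constants). -/
noncomputable def limConst (U : (Ω → ℝ) → EReal) : EReal := ⨆ y : ℝ, U (fun _ => y)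

/-- A utility functional: increasing, normalized, `[-∞,∞)`-valued,
and satisfying `U(Y) < U(∞)` for all `Y ∈ L¹`. -/
structure IsUtility (μ : Measure Ω) (U : (Ω → ℝ) → EReal) : Prop where
  mono : MonoInc μ U
  norm : U (fun _ => (0 : ℝ)) = 0
  ne_top : ∀ Y : Ω → ℝ, Integrable Y μ → U Y ≠ ⊤
  non_sat : ∀ Y : Ω → ℝ, Integrable Y μ → U Y < limConst U

/-- A risk functional: decreasing, normalized, `(-∞,∞]`-valued. -/
structure IsRisk (μ : Measure Ω) (R : (Ω → ℝ) → EReal) : Prop where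
  mono : MonoDec μ R
  norm : R (fun _ => (0 : ℝ)) = 0
  ne_bot : ∀ Y : Ω → ℝ, Integrable Y μ → R Y ≠ ⊥

/-- Positive star-shapedness: `R(λY) ≥ λ R(Y)` for `λ > 1`. -/
def PosStarShaped (μ : Measure Ω) (R : (Ω → ℝ) → EReal) : Prop :=
  ∀ Y : Ω → ℝ, Integrable Y μ → ∀ l : ℝ, 1 < l → (l : EReal) * R Y ≤ R (scale l Y)

/-- The lower Fatou property. -/
def LowerFatou (μ : Measure Ω) (R : (Ω → ℝ) → EReal) : Prop :=
  ∀ (Yn : ℕ → Ω → ℝ) (Y Z : Ω → ℝ), (∀ n, Integrable (Yn n) μ) →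
    Integrable Y μ → Integrable Z μ →
    (∀ᵐ ω ∂μ, Tendsto (fun n => Yn n ω) atTop (nhds (Y ω))) →
    (∀ n, ∀ᵐ ω ∂μ, |Yn n ω| ≤ Z ω) →
    R Y ≤ Filter.liminf (fun n => R (Yn n)) atTop

/-- The upper Fatou property. -/
def UpperFatou (μ : Measure Ω) (U : (Ω → ℝ) → EReal) : Prop :=
  ∀ (Yn : ℕ → Ω → ℝ) (Y Z : Ω → ℝ), (∀ n, Integrable (Yn n) μ) →
    Integrable Y μ → Integrable Z μ →
    (∀ᵐ ω ∂μ, Tendsto (fun n => Yn n ω) atTop (nhds (Y ω))) →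
    (∀ n, ∀ᵐ ω ∂μ, |Yn n ω| ≤ Z ω) →
    Filter.limsup (fun n => U (Yn n)) atTop ≤ U Y

/-- Sensitivity to large losses for a risk functional. -/
def SensLLRisk (μ : Measure Ω) (R : (Ω → ℝ) → EReal) : Prop :=
  ∀ Y : Ω → ℝ, Integrable Y μ → 0 < μ {ω | Y ω < 0} →
    ∃ l₀ : ℝ, 0 < l₀ ∧ ∀ l : ℝ, l₀ < l → 0 < R (scale l Y)

/-- Sensitivity to large losses for a utility functional. -/
def SensLLUtility (μ : Measure Ω) (U : (Ω → ℝ) → EReal) : Prop :=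
  ∀ Y : Ω → ℝ, Integrable Y μ → 0 < μ {ω | Y ω < 0} →
    ∃ l₀ : ℝ, 0 < l₀ ∧ ∀ l : ℝ, l₀ < l → U (scale l Y) < 0

/-- Weak sensitivity to large losses for a utility functional. -/
def WeakSensLLUtility (μ : Measure Ω) (U : (Ω → ℝ) → EReal) : Prop :=
  ∀ Y : Ω → ℝ, Integrable Y μ → 0 < μ {ω | Y ω < 0} →
    Filter.limsup (fun l : ℝ => U (scale l Y)) atTop < limConst U

/-- Sensitivity equivalence for a utility functional. -/
def SensEquivUtility (μ : Measure Ω) (U : (Ω → ℝ) → EReal) : Prop :=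
  WeakSensLLUtility μ U ↔ SensLLUtility μ U

/-- Law-invariance of a functional on `L¹`. -/
def LawInvariant (μ : Measure Ω) (H : (Ω → ℝ) → EReal) : Prop :=
  ∀ Y Z : Ω → ℝ, Integrable Y μ → Integrable Z μ →
    ProbabilityTheory.IdentDistrib Y Z μ μ → H Y = H Z

/-- Cash-additivity: `H(Y + c) = H(Y) + H(c)` for constants `c`. -/
def CashAdditive (μ : Measure Ω) (H : (Ω → ℝ) → EReal) : Prop :=
  ∀ Y : Ω → ℝ, Integrable Y μ → ∀ c : ℝ,
    H (fun ω => Y ω + c) = H Y + H (fun _ => c)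

/-- Cash-convexity of a risk functional. -/
def CashConvex (μ : Measure Ω) (R : (Ω → ℝ) → EReal) : Prop :=
  ∀ Y : Ω → ℝ, Integrable Y μ → ∀ c l : ℝ, 0 < l → l < 1 →
    R (fun ω => l * Y ω + (1 - l) * c) ≤
      (l : EReal) * R Y + ((1 - l : ℝ) : EReal) * R (fun _ => c)

/-- Cash-concavity of a utility functional. -/
def CashConcave (μ : Measure Ω) (U : (Ω → ℝ) → EReal) : Prop :=
  ∀ Y : Ω → ℝ, Integrable Y μ → ∀ c l : ℝ, 0 < l → l < 1 →
    (l : EReal) * U Y + ((1 - l : ℝ) : EReal) * U (fun _ => c) ≤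
      U (fun ω => l * Y ω + (1 - l) * c)

/-- Strict quasi-concavity of a utility functional. -/
def StrictQuasiConcave (μ : Measure Ω) (U : (Ω → ℝ) → EReal) : Prop :=
  ∀ Y Z : Ω → ℝ, Integrable Y μ → Integrable Z μ → 0 < μ {ω | Y ω ≠ Z ω} →
    ∀ l : ℝ, 0 < l → l < 1 →
      min (U Y) (U Z) < U (fun ω => l * Y ω + (1 - l) * Z ω)

/-- Quasi-convexity of a risk functional. -/
def QuasiConvex (μ : Measure Ω) (R : (Ω → ℝ) → EReal) : Prop :=
  ∀ Y Z : Ω → ℝ, Integrable Y μ → Integrable Z μ → ∀ l : ℝ, 0 < l → l < 1 →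
    R (fun ω => l * Y ω + (1 - l) * Z ω) ≤ max (R Y) (R Z)

/-- An atomless measure. -/
def Atomless (μ : Measure Ω) : Prop :=
  ∀ s : Set Ω, MeasurableSet s → μ s ≠ 0 →
    ∃ t : Set Ω, t ⊆ s ∧ MeasurableSet t ∧ 0 < μ t ∧ μ t < μ s

/-- A market: a finite tuple of integrable payoffs, non-redundant
(linearly independent in `L¹`) and arbitrage-free. -/
structure IsMarket (μ : Measure Ω) {d : ℕ} (X : Fin d → Ω → ℝ) : Prop where
  integrable : ∀ i, Integrable (X i) μ
  nonredundant : ∀ π : Fin d → ℝ, (∀ᵐ ω ∂μ, port X π ω = 0) → π = 0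
  no_arbitrage : ¬∃ π : Fin d → ℝ,
      (∀ᵐ ω ∂μ, 0 ≤ port X π ω) ∧ 0 < μ {ω | 0 < port X π ω}

/-- `(U,R)`-portfolio selection is weakly well posed for the market `X`. -/
def WeaklyWellPosedFor (U R : (Ω → ℝ) → EReal) {d : ℕ} (X : Fin d → Ω → ℝ) : Prop :=
  ∀ Rmax : ℝ, 0 ≤ Rmax →
    (⨆ π : {π : Fin d → ℝ // R (port X π) ≤ (Rmax : EReal)}, U (port X π.1)) < limConst U

/-- `(U,R)`-portfolio selection is well posed for the market `X`:
the supremum is attained by some portfolio. -/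
def WellPosedFor (U R : (Ω → ℝ) → EReal) {d : ℕ} (X : Fin d → Ω → ℝ) : Prop :=
  ∀ Rmax : ℝ, 0 ≤ Rmax →
    ∃ πs : Fin d → ℝ, R (port X πs) ≤ (Rmax : EReal) ∧
      ∀ π : Fin d → ℝ, R (port X π) ≤ (Rmax : EReal) → U (port X π) ≤ U (port X πs)

/-- Market-independent weak well-posedness. -/
def MIWeaklyWellPosed (μ : Measure Ω) (U R : (Ω → ℝ) → EReal) : Prop :=
  ∀ (d : ℕ), 0 < d → ∀ X : Fin d → Ω → ℝ, IsMarket μ X → WeaklyWellPosedFor U R X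

/-- Market-independent well-posedness. -/
def MIWellPosed (μ : Measure Ω) (U R : (Ω → ℝ) → EReal) : Prop :=
  ∀ (d : ℕ), 0 < d → ∀ X : Fin d → Ω → ℝ, IsMarket μ X → WellPosedFor U R X

/-- The market `X` admits `(U,R)`-arbitrage. -/
def URArbitrage (U R : (Ω → ℝ) → EReal) {d : ℕ} (X : Fin d → Ω → ℝ) : Prop :=
  ∃ (π : ℕ → Fin d → ℝ) (Rt : ℝ), 0 ≤ Rt ∧
    Tendsto (fun n => U (port X (π n))) atTop (nhds (limConst U)) ∧
    ∀ n, R (port X (π n)) ≤ (Rt : EReal)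

/-- The terminal payoff `θ · S̄₁` of a portfolio `θ` in a normalized market model
with interest rate `r` and risky payoffs `S`. -/
def mmPayoff {d : ℕ} (r : ℝ) (S : Fin d → Ω → ℝ) (θ : Fin (d + 1) → ℝ) : Ω → ℝ :=
  fun ω => θ 0 * (1 + r) + ∑ i : Fin d, θ i.succ * S i ω

/-- A normalized, arbitrage-free and non-redundant market model with `d` risky assets:
all initial prices are `1`, asset `0` is riskless with payoff `1 + r`. -/
structure MarketModel (μ : Measure Ω) (d : ℕ) where
  r : ℝ
  hr : -1 < r
  S : Fin d → Ω → ℝ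
  integrable : ∀ i, Integrable (S i) μ
  nonredundant : ∀ θ : Fin (d + 1) → ℝ, (∀ᵐ ω ∂μ, mmPayoff r S θ ω = 0) → θ = 0
  no_arbitrage : ¬∃ θ : Fin (d + 1) → ℝ, (∑ j, θ j) ≤ 0 ∧
    (∀ᵐ ω ∂μ, 0 ≤ mmPayoff r S θ ω) ∧ 0 < μ {ω | 0 < mmPayoff r S θ ω}

/-- The terminal payoff `θ · S̄₁`. -/
def payoff {μ : Measure Ω} {d : ℕ} (M : MarketModel μ d) (θ : Fin (d + 1) → ℝ) : Ω → ℝ :=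
  mmPayoff M.r M.S θ

/-- The initial cost `θ · S̄₀` (all initial prices are normalized to `1`). -/
def cost {μ : Measure Ω} {d : ℕ} (_M : MarketModel μ d) (θ : Fin (d + 1) → ℝ) : ℝ :=
  ∑ j, θ j

/-- The positive part of an extended real number, as an element of `ℝ≥0∞`. -/
noncomputable def posPart (x : EReal) : ℝ≥0∞ :=
  if x = ⊤ then ⊤ else ENNReal.ofReal x.toReal

/-- The expected utility `E[u(Y)]` of a position `Y`, as an extended real number. -/
noncomputable def expEU (μ : Measure Ω) (u : ℝ → EReal) (Y : Ω → ℝ) : EReal :=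
  ((∫⁻ ω, posPart (u (Y ω)) ∂μ : ℝ≥0∞) : EReal) -
    ((∫⁻ ω, posPart (-(u (Y ω))) ∂μ : ℝ≥0∞) : EReal)

/-- A utility function: increasing, normalized, `[-∞,∞)`-valued, non-satiated
(`u(∞) > u(z)` for all `z`), and of at most linear growth at `+∞`
(`limsup_{y→∞} u(y)/y < ∞`). -/
structure IsUtilityFun (u : ℝ → EReal) : Prop where
  mono : Monotone u
  norm : u 0 = 0
  ne_top : ∀ y : ℝ, u y ≠ ⊤
  non_sat : ∀ z : ℝ, u z < ⨆ y : ℝ, u y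
  growth : ∃ a : ℝ, ∀ᶠ y in (atTop : Filter ℝ), u y ≤ ((a * y : ℝ) : EReal)

/-- `u` is unbounded (its range is not contained in any bounded interval of `ℝ`). -/
def UnboundedFun (u : ℝ → EReal) : Prop :=
  ¬∃ C : ℝ, ∀ y : ℝ, ((-C : ℝ) : EReal) ≤ u y ∧ u y ≤ ((C : ℝ) : EReal)

/-- `u` is negatively star-shaped on `ℝ₊`: `u(λy) ≤ λ u(y)` for `y ≥ 0`, `λ ≥ 1`. -/
def NegStarShapedPos (u : ℝ → EReal) : Prop :=
  ∀ y : ℝ, 0 ≤ y → ∀ l : ℝ, 1 ≤ l → u (l * y) ≤ (l : EReal) * u y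

/-- The asymptotic loss-gain ratio `ALG(u) = limsup_{y→∞} u(-y)/u(y)`. -/
noncomputable def ALG (u : ℝ → EReal) : EReal :=
  Filter.limsup (fun y : ℝ => u (-y) / u y) atTop

/-- Strict concavity of a `[-∞,∞)`-valued utility function. -/
def StrictConcaveFun (u : ℝ → EReal) : Prop :=
  ∀ y z : ℝ, y ≠ z → ∀ l : ℝ, 0 < l → l < 1 →
    (l : EReal) * u y + ((1 - l : ℝ) : EReal) * u z < u (l * y + (1 - l) * z)


section Helpers

variable {Ω : Type*} [MeasurableSpace Ω]

lemma posPart_le_ofReal {x : EReal} {r : ℝ} (hx : x ≤ (r : EReal)) (hr : 0 ≤ r) :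
    posPart x ≤ ENNReal.ofReal r := by
  have hxt : x ≠ ⊤ := fun h => by simp [h] at hx
  rw [posPart, if_neg hxt]
  apply ENNReal.ofReal_le_ofReal
  rcases eq_or_ne x ⊥ with h | h
  · simp [h, hr]
  · have := EReal.toReal_le_toReal hx h (EReal.coe_ne_top r)
    simpa using this

lemma ofReal_le_posPart {x : EReal} {r : ℝ} (hx : (r : EReal) ≤ x) (hxt : x ≠ ⊤) :
    ENNReal.ofReal r ≤ posPart x := by
  rw [posPart, if_neg hxt]
  apply ENNReal.ofReal_le_ofReal
  have hb : x ≠ ⊥ := fun h => by simp [h] at hx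
  have := EReal.toReal_le_toReal hx (EReal.coe_ne_bot r) hxt
  simpa using this

lemma posPart_eq_zero_of_nonpos {x : EReal} (h : x ≤ 0) : posPart x = 0 := by
  have := posPart_le_ofReal (r := 0) (by exact_mod_cast h) le_rfl
  simpa using this

lemma le_coe_of_forall_eps {x : EReal} {c : ℝ}
    (h : ∀ ε : ℝ, 0 < ε → x ≤ ((c + ε : ℝ) : EReal)) : x ≤ (c : EReal) := by
  by_contra hc
  push_neg at hc
  obtain ⟨z, hz1, hz2⟩ := EReal.exists_between_coe_real hc
  have hz1' : c < z := by exact_mod_cast hz1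
  have := h (z - c) (by linarith)
  rw [show c + (z - c) = z by ring] at this
  exact absurd hz2 (not_lt.2 this)

lemma eq_bot_of_forall_le_coe {x : EReal} (h : ∀ b : ℝ, x ≤ (b : EReal)) : x = ⊥ := by
  by_contra hx
  obtain ⟨z, hz1, hz2⟩ := EReal.exists_between_coe_real (Ne.bot_lt hx)
  exact absurd (h z) (not_le.2 hz2)

end Helpers

section Helpers2

variable {Ω : Type*} [MeasurableSpace Ω]

lemma usup_eq_top (u : ℝ → EReal) (hu : IsUtilityFun u) (hunb : UnboundedFun u)
    (halg : ⊥ < ALG u) : (⨆ y : ℝ, u y) = ⊤ := by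
  by_contra hStop
  set S := ⨆ y : ℝ, u y with hS
  have hS0 : 0 < S := by
    have := hu.non_sat 0
    rwa [hu.norm] at this
  have hSb : S ≠ ⊥ := (lt_trans (by simp) hS0).ne'
  set s := S.toReal with hs
  have hSr : S = (s : EReal) := (EReal.coe_toReal hStop hSb).symm
  have hspos : 0 < s := by
    rw [hSr] at hS0; exact_mod_cast hS0
  have hle : ∀ y : ℝ, u y ≤ (s : EReal) := fun y => hSr ▸ le_iSup u y
  -- some point with positive utility
  obtain ⟨y₀, hy₀⟩ : ∃ y₀ : ℝ, 0 < u y₀ := by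
    by_contra hno
    push_neg at hno
    have : S ≤ 0 := iSup_le hno
    exact absurd hS0 (not_lt.2 this)
  -- u takes arbitrarily negative values
  have hneg : ∀ b : ℝ, ∃ y₁ : ℝ, u y₁ < (b : EReal) := by
    intro b
    rw [UnboundedFun] at hunb
    push_neg at hunb
    obtain ⟨y, hy⟩ := hunb (max s (-b))
    have hlt : u y < ((-max s (-b) : ℝ) : EReal) := by
      by_contra hh
      push_neg at hh
      have h2 := hy hh
      exact absurd (le_trans (hle y) (by exact_mod_cast le_max_left s (-b))) (not_le.2 h2)
    refine ⟨y, lt_of_lt_of_le hlt ?_⟩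
    have : -max s (-b) ≤ b := by
      have := le_max_right s (-b); linarith
    exact_mod_cast this
  -- ALG u = ⊥
  have hALG : ALG u = ⊥ := by
    apply eq_bot_of_forall_le_coe
    intro b
    refine Filter.limsup_le_of_le (by isBoundedDefault) ?_
    obtain ⟨y₁, hy₁⟩ := hneg (-(|b| + 1) * s)
    rw [Filter.eventually_atTop]
    refine ⟨max y₀ (-y₁), fun y hy => ?_⟩
    have hyy₀ : y₀ ≤ y := le_trans (le_max_left _ _) hy
    have hyy₁ : -y ≤ y₁ := by
      have := le_trans (le_max_right y₀ (-y₁)) hy; linarith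
    have hd0 : 0 < u y := lt_of_lt_of_le hy₀ (hu.mono hyy₀)
    have hdt : u y ≠ ⊤ := hu.ne_top y
    have hdb : u y ≠ ⊥ := (lt_trans (by simp : (⊥:EReal) < 0) hd0).ne'
    set dR := (u y).toReal with hdR
    have hdeq : u y = (dR : EReal) := (EReal.coe_toReal hdt hdb).symm
    have hdRpos : 0 < dR := by rw [hdeq] at hd0; exact_mod_cast hd0
    have hdRs : dR ≤ s := by
      have := hle y; rw [hdeq] at this; exact_mod_cast this
    have hx : u (-y) ≤ ((-(|b| + 1) * s : ℝ) : EReal) := le_of_lt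
      (lt_of_le_of_lt (hu.mono hyy₁) hy₁)
    rw [EReal.div_le_iff_le_mul hd0 hdt]
    calc u (-y) ≤ ((-(|b| + 1) * s : ℝ) : EReal) := hx
      _ ≤ ((dR * b : ℝ) : EReal) := by
          apply EReal.coe_le_coe_iff.2
          rcases le_or_gt 0 b with hb | hb
          · nlinarith [abs_nonneg b]
          · have : |b| = -b := abs_of_neg hb
            nlinarith
      _ = (u y) * (b : EReal) := by rw [hdeq]; exact_mod_cast rfl
  rw [hALG] at halg
  exact lt_irrefl _ halg

lemma ae_exists_mem {μ : Measure Ω} {p : Ω → Prop} {s : Set Ω}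
    (h : ∀ᵐ ω ∂μ, p ω) (hs : 0 < μ s) : ∃ ω, ω ∈ s ∧ p ω := by
  by_contra hno
  push_neg at hno
  have hsub : s ⊆ {ω | ¬ p ω} := fun ω hω => hno ω hω
  have := measure_mono_null hsub (MeasureTheory.ae_iff.1 h)
  exact absurd this hs.ne'

end Helpers2

section Helpers3

variable {Ω : Type*} [MeasurableSpace Ω]

lemma atomless_half {μ : Measure Ω} (hatomless : Atomless μ) (s : Set Ω)
    (hs : MeasurableSet s) (h0 : μ s ≠ 0) (hfin : μ s ≠ ⊤) :
    ∃ C : Set Ω, C ⊆ s ∧ MeasurableSet C ∧ 0 < μ C ∧ μ C ≤ μ s * 2⁻¹ := by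
  obtain ⟨t, hts, htm, ht0, htlt⟩ := hatomless s hs h0
  have htfin : μ t ≠ ⊤ := (lt_of_lt_of_le htlt (le_top)).ne
  have hdiff : μ (s \ t) = μ s - μ t := measure_diff hts htm.nullMeasurableSet htfin
  have hsum : μ s ≤ μ t + μ (s \ t) := by
    calc μ s ≤ μ (t ∪ s \ t) := measure_mono (by intro ω hω; by_cases h : ω ∈ t <;> simp [h, hω])
      _ ≤ μ t + μ (s \ t) := measure_union_le _ _
  rcases le_or_gt (μ t) (μ s * 2⁻¹) with h | h
  · exact ⟨t, hts, htm, ht0, h⟩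
  · refine ⟨s \ t, Set.diff_subset, hs.diff htm, ?_, ?_⟩
    · rcases eq_or_ne (μ (s \ t)) 0 with h0' | h0'
      · rw [h0', add_zero] at hsum
        exact absurd hsum (not_le.2 htlt)
      · exact h0'.bot_lt
    · rw [hdiff]
      rw [tsub_le_iff_right]
      calc μ s = μ s * 2⁻¹ + μ s * 2⁻¹ := by
            rw [← mul_add, ENNReal.inv_two_add_inv_two, mul_one]
        _ ≤ μ s * 2⁻¹ + μ t := by exact add_le_add_right h.le _
  
lemma atomless_small {μ : Measure Ω} (hatomless : Atomless μ) (s : Set Ω)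
    (hs : MeasurableSet s) (h0 : μ s ≠ 0) (hfin : μ s ≠ ⊤) {ε : ℝ≥0∞} (hε : 0 < ε) :
    ∃ C : Set Ω, C ⊆ s ∧ MeasurableSet C ∧ 0 < μ C ∧ μ C < ε := by
  have key : ∀ n : ℕ, ∃ C : Set Ω, C ⊆ s ∧ MeasurableSet C ∧ 0 < μ C ∧ μ C ≤ μ s * 2⁻¹ ^ n := by
    intro n
    induction n with
    | zero => exact ⟨s, le_rfl, hs, h0.bot_lt, by simp⟩
    | succ n ih =>
      obtain ⟨C, hCs, hCm, hC0, hCle⟩ := ih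
      obtain ⟨D, hDC, hDm, hD0, hDle⟩ := atomless_half hatomless C hCm hC0.ne'
        ((lt_of_le_of_lt (measure_mono hCs) (lt_top_iff_ne_top.2 hfin)).ne)
      refine ⟨D, hDC.trans hCs, hDm, hD0, ?_⟩
      calc μ D ≤ μ C * 2⁻¹ := hDle
        _ ≤ μ s * 2⁻¹ ^ n * 2⁻¹ := by exact mul_le_mul_left hCle _
        _ = μ s * 2⁻¹ ^ (n + 1) := by rw [mul_assoc, pow_succ]
  obtain ⟨n, hn⟩ := ENNReal.exists_inv_two_pow_lt (a := ε / μ s) (ENNReal.div_pos hε.ne' hfin).ne'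
  obtain ⟨C, hCs, hCm, hC0, hCle⟩ := key n
  refine ⟨C, hCs, hCm, hC0, ?_⟩
  calc μ C ≤ μ s * 2⁻¹ ^ n := hCle
    _ < μ s * (ε / μ s) := by
        exact ENNReal.mul_lt_mul_right h0 hfin hn
    _ ≤ ε := ENNReal.mul_div_le

end Helpers3

section Helpers4

variable {Ω : Type*} [MeasurableSpace Ω]

lemma exists_neg_level {μ : Measure Ω} {W : Ω → ℝ} {t : ℝ}
    (h : 0 < μ {ω | W ω < t}) : ∃ δ : ℝ, 0 < δ ∧ 0 < μ {ω | W ω < t - δ} := by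
  have hcov : {ω | W ω < t} ⊆ ⋃ n : ℕ, {ω | W ω < t - 1 / (n + 1)} := by
    intro ω hω
    obtain ⟨n, hn⟩ := exists_nat_one_div_lt (show (0:ℝ) < t - W ω by
      simp only [Set.mem_setOf_eq] at hω; linarith)
    exact Set.mem_iUnion.2 ⟨n, by simp only [Set.mem_setOf_eq]; linarith⟩
  by_contra hno
  push_neg at hno
  have hz : ∀ n : ℕ, μ {ω | W ω < t - 1 / (n + 1)} = 0 := fun n =>
    le_antisymm (hno (1 / (n + 1)) (by positivity)) zero_le
  exact absurd (measure_mono_null hcov (measure_iUnion_null hz)) h.ne'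

lemma exists_pos_level {μ : Measure Ω} {W : Ω → ℝ} {t : ℝ}
    (h : 0 < μ {ω | t < W ω}) : ∃ δ : ℝ, 0 < δ ∧ 0 < μ {ω | t + δ < W ω} := by
  have hseteq : {ω | (fun x => -W x) ω < -t} = {ω | t < W ω} := by
    ext ω; simp only [Set.mem_setOf_eq]; constructor <;> intro <;> linarith
  have h' : 0 < μ {ω | (fun x => -W x) ω < -t} := by rw [hseteq]; exact h
  obtain ⟨δ, hδ, hμ⟩ := exists_neg_level h'
  refine ⟨δ, hδ, ?_⟩
  have hseteq2 : {ω | (fun x => -W x) ω < -t - δ} = {ω | t + δ < W ω} := by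
    ext ω; simp only [Set.mem_setOf_eq]; constructor <;> intro <;> linarith
  rw [hseteq2] at hμ
  exact hμ

lemma exists_W {μ : Measure Ω} [IsProbabilityMeasure μ] (hatomless : Atomless μ)
    {R : (Ω → ℝ) → EReal} (hR : IsRisk μ R) (hnsll : ¬SensLLRisk μ R) :
    ∃ (W : Ω → ℝ) (t : ℝ), Measurable W ∧ Integrable W μ ∧ t ≤ 0 ∧
      0 < μ {ω | W ω < t} ∧ 0 < μ {ω | t < W ω} ∧
      ∀ L : ℝ, ∃ l : ℝ, L ≤ l ∧ 0 < l ∧ R (scale l W) ≤ 0 := by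
  rw [SensLLRisk] at hnsll
  push_neg at hnsll
  obtain ⟨Y, hYint, hYneg, hprop⟩ := hnsll
  set W₀ := hYint.1.mk Y with hW₀def
  have hae : Y =ᵐ[μ] W₀ := hYint.1.ae_eq_mk
  have hW₀int : Integrable W₀ μ := hYint.congr hae
  have hW₀meas : Measurable W₀ := hYint.1.stronglyMeasurable_mk.measurable
  have hRW : ∀ l : ℝ, R (scale l W₀) = R (scale l Y) := by
    intro l
    have h1 : (scale l Y) =ᵐ[μ] (scale l W₀) := by
      filter_upwards [hae] with ω h
      simp [scale, h]
    have hIY : Integrable (scale l Y) μ := hYint.const_mul l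
    have hIW : Integrable (scale l W₀) μ := hW₀int.const_mul l
    exact le_antisymm (hR.mono _ _ hIY hIW h1.le) (hR.mono _ _ hIW hIY h1.symm.le)
  have hpropW : ∀ l₀ : ℝ, 0 < l₀ → ∃ l, l₀ < l ∧ R (scale l W₀) ≤ 0 := by
    intro l₀ h
    obtain ⟨l, h1, h2⟩ := hprop l₀ h
    exact ⟨l, h1, (hRW l) ▸ h2⟩
  have hW₀neg : 0 < μ {ω | W₀ ω < 0} := by
    have hsetneg : μ {ω | W₀ ω < 0} = μ {ω | Y ω < 0} := by
      apply measure_congr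
      filter_upwards [hae] with ω h
      show (W₀ ω < 0) = (Y ω < 0)
      rw [h]
    exact hsetneg ▸ hYneg
  by_cases hcase : ∃ t : ℝ, t ≤ 0 ∧ 0 < μ {ω | W₀ ω < t} ∧ 0 < μ {ω | t < W₀ ω}
  · obtain ⟨t, ht0, h1, h2⟩ := hcase
    refine ⟨W₀, t, hW₀meas, hW₀int, ht0, h1, h2, fun L => ?_⟩
    obtain ⟨l, hl1, hl2⟩ := hpropW (max L 1) (by positivity)
    exact ⟨l, (le_max_left _ _).trans hl1.le,
      lt_of_lt_of_le (by norm_num) ((le_max_right L 1).trans hl1.le), hl2⟩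
  · push_neg at hcase
    obtain ⟨δ₀, hδ₀, hlev⟩ := exists_neg_level (t := 0) hW₀neg
    set t₀ : ℝ := 0 - δ₀ with ht₀def
    have ht₀neg : t₀ < 0 := by rw [ht₀def]; linarith
    have hbig : μ {ω | t₀ < W₀ ω} = 0 :=
      le_antisymm (hcase t₀ ht₀neg.le hlev) zero_le
    have haeW : ∀ᵐ ω ∂μ, W₀ ω ≤ t₀ := by
      rw [MeasureTheory.ae_iff]
      convert hbig using 2
      ext ω
      simp [not_le]
    have hnegconst : ∀ l : ℝ, 0 < l → R (fun _ => -l) ≤ 0 := by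
      intro l hl
      obtain ⟨l', hl'1, hl'2⟩ := hpropW (max 1 (l / δ₀)) (by positivity)
      have hl'pos : (0:ℝ) < l' := lt_of_lt_of_le (by norm_num) ((le_max_left 1 _).trans hl'1.le)
      have hll' : l / δ₀ ≤ l' := (le_max_right 1 _).trans hl'1.le
      have hlt : l' * t₀ ≤ -l := by
        have : l ≤ l' * δ₀ := by
          rw [div_le_iff₀ hδ₀] at hll'; linarith
        rw [ht₀def]; nlinarith
      have hstep1 : R (fun _ => l' * t₀) ≤ R (scale l' W₀) := by
        apply hR.mono _ _ (hW₀int.const_mul l') (integrable_const _)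
        filter_upwards [haeW] with ω h
        show l' * W₀ ω ≤ l' * t₀
        nlinarith
      have hstep0 : R (fun _ => -l) ≤ R (fun _ => l' * t₀) := by
        apply hR.mono _ _ (integrable_const _) (integrable_const _)
        filter_upwards with ω
        exact hlt
      exact hstep0.trans (hstep1.trans hl'2)
    obtain ⟨A, hAuniv, hAm, hA0, hAlt⟩ := hatomless Set.univ MeasurableSet.univ (by simp)
    set WB : Ω → ℝ := fun ω => A.indicator (fun _ => (2:ℝ)) ω - 1 with hWBdef
    have hWB_on : ∀ ω ∈ A, WB ω = 1 := by
      intro ω h; simp [hWBdef, Set.indicator_of_mem h]; norm_num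
    have hWB_off : ∀ ω ∉ A, WB ω = -1 := by
      intro ω h; simp [hWBdef, Set.indicator_of_notMem h]
    have hWBmeas : Measurable WB :=
      (measurable_const.indicator hAm).sub measurable_const
    have hWBbd : ∀ ω, |WB ω| ≤ 1 := by
      intro ω
      by_cases h : ω ∈ A
      · rw [hWB_on ω h]; norm_num
      · rw [hWB_off ω h]; norm_num
    have hWBint : Integrable WB μ := by
      apply Integrable.mono' (integrable_const (1:ℝ)) hWBmeas.aestronglyMeasurable
      filter_upwards with ω
      simpa using hWBbd ω
    refine ⟨WB, 0, hWBmeas, hWBint, le_rfl, ?_, ?_, ?_⟩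
    · have hset : {ω | WB ω < 0} = Aᶜ := by
        ext ω
        by_cases h : ω ∈ A
        · simp [hWB_on ω h, h]
        · simp [hWB_off ω h, h]
      rw [hset]
      have hcompl : μ Aᶜ = 1 - μ A := by
        rw [measure_compl hAm (measure_ne_top μ A), measure_univ]
      rw [hcompl]
      rw [measure_univ] at hAlt
      exact tsub_pos_iff_lt.2 hAlt
    · have hset : {ω | 0 < WB ω} = A := by
        ext ω
        by_cases h : ω ∈ A
        · simp [hWB_on ω h, h]
        · simp [hWB_off ω h, h]
      rw [hset]
      exact hA0
    · intro L
      have hM : (0:ℝ) < max L 1 := lt_of_lt_of_le (by norm_num) (le_max_right L 1)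
      refine ⟨max L 1, le_max_left _ _, hM, ?_⟩
      have h1 : R (scale (max L 1) WB) ≤ R (fun _ => -(max L 1)) := by
        apply hR.mono _ _ (integrable_const _) (hWBint.const_mul _)
        filter_upwards with ω
        have := hWBbd ω
        have h2 : -1 ≤ WB ω := by cases abs_le.1 this; assumption
        show -(max L 1) ≤ max L 1 * WB ω
        nlinarith
      exact h1.trans (hnegconst _ hM)

end Helpers4

section Helpers5

variable {Ω : Type*} [MeasurableSpace Ω]

lemma risk_bound {μ : Measure Ω} [IsProbabilityMeasure μ] {R : (Ω → ℝ) → EReal}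
    (hR : IsRisk μ R) (hcc : CashConvex μ R)
    {V : Ω → ℝ} (hVint : Integrable V μ)
    (hRV : ∀ L : ℝ, ∃ l', L ≤ l' ∧ 0 < l' ∧ R (scale l' V) ≤ 0)
    {w l : ℝ} (hw : 0 < w) (hl : 0 < l) :
    R (fun ω => w + l * V ω) ≤ R (fun _ => w) := by
  have hg0 : R (fun _ => w) ≤ 0 := by
    rw [← hR.norm]
    apply hR.mono _ _ (integrable_const _) (integrable_const _)
    filter_upwards with ω
    exact hw.le
  have hgbot : R (fun _ => w) ≠ ⊥ := hR.ne_bot _ (integrable_const _)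
  have hgtop : R (fun _ => w) ≠ ⊤ := (lt_of_le_of_lt hg0 (by simp)).ne
  set gw := (R (fun _ => w)).toReal with hgwdef
  have hgw : R (fun _ => w) = (gw : EReal) := (EReal.coe_toReal hgtop hgbot).symm
  have hgwle : gw ≤ 0 := by
    rw [hgw] at hg0; exact_mod_cast hg0
  rw [hgw]
  apply le_coe_of_forall_eps
  intro ε hε
  set B := 1 - gw with hBdef
  have hB : 0 < B := by rw [hBdef]; linarith
  obtain ⟨l', hl'ge, hl'pos, hl'R⟩ := hRV (max (2 * l) (l * B / ε))
  have hl'2l : 2 * l ≤ l' := (le_max_left _ _).trans hl'ge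
  have hl'B : l * B / ε ≤ l' := (le_max_right _ _).trans hl'ge
  set lam := l / l' with hlamdef
  have hlam0 : 0 < lam := div_pos hl hl'pos
  have hlam1 : lam < 1 := by
    rw [hlamdef, div_lt_one hl'pos]; linarith
  have hlamB : lam * B ≤ ε := by
    rw [hlamdef, div_mul_eq_mul_div, div_le_iff₀ hl'pos]
    rw [div_le_iff₀ hε] at hl'B
    linarith
  set c := w / (1 - lam) with hcdef
  have h1lam : 0 < 1 - lam := by linarith
  have hcw : w ≤ c := by
    rw [hcdef, le_div_iff₀ h1lam]; nlinarith
  -- cash convexity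
  have hkey := hcc (scale l' V) (hVint.const_mul l') c lam hlam0 hlam1
  have hfun : (fun ω => lam * scale l' V ω + (1 - lam) * c) = (fun ω => w + l * V ω) := by
    funext ω
    show lam * (l' * V ω) + (1 - lam) * c = w + l * V ω
    have hc1 : (1 - lam) * c = w := by
      rw [hcdef]; field_simp
    have hl1 : lam * l' = l := by
      rw [hlamdef]; field_simp
    rw [hc1, ← mul_assoc, hl1]; ring
  rw [hfun] at hkey
  -- bound the RHS
  have hx0 : R (scale l' V) ≤ 0 := hl'R
  have hxbot : R (scale l' V) ≠ ⊥ := hR.ne_bot _ (hVint.const_mul l')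
  have hxtop : R (scale l' V) ≠ ⊤ := (lt_of_le_of_lt hx0 (by simp)).ne
  set xR := (R (scale l' V)).toReal with hxRdef
  have hxeq : R (scale l' V) = (xR : EReal) := (EReal.coe_toReal hxtop hxbot).symm
  have hxRle : xR ≤ 0 := by rw [hxeq] at hx0; exact_mod_cast hx0
  have hyle : R (fun _ => c) ≤ (gw : EReal) := by
    rw [← hgw]
    apply hR.mono _ _ (integrable_const _) (integrable_const _)
    filter_upwards with ω
    exact hcw
  have hybot : R (fun _ => c) ≠ ⊥ := hR.ne_bot _ (integrable_const _)
  have hytop : R (fun _ => c) ≠ ⊤ := (lt_of_le_of_lt hyle (by simp)).ne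
  set yR := (R (fun _ => c)).toReal with hyRdef
  have hyeq : R (fun _ => c) = (yR : EReal) := (EReal.coe_toReal hytop hybot).symm
  have hyRle : yR ≤ gw := by rw [hyeq] at hyle; exact_mod_cast hyle
  calc R (fun ω => w + l * V ω)
      ≤ (lam : EReal) * R (scale l' V) + ((1 - lam : ℝ) : EReal) * R (fun _ => c) := hkey
    _ = ((lam * xR + (1 - lam) * yR : ℝ) : EReal) := by
        rw [hxeq, hyeq]
        rw [← EReal.coe_mul, ← EReal.coe_mul, ← EReal.coe_add]
    _ ≤ ((gw + ε : ℝ) : EReal) := by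
        apply EReal.coe_le_coe_iff.2
        nlinarith

end Helpers5

set_option maxHeartbeats 1000000 in
/-- if `ALG(u) > -∞` and `R` is not sensitive to large losses, there is a
normalized market model in which, for every initial wealth, a sequence of feasible
portfolios drives the expected utility to `u(∞)`. -/
theorem stmt17 {Ω : Type*} [MeasurableSpace Ω] (μ : Measure Ω) [IsProbabilityMeasure μ]
    (hatomless : Atomless μ)
    (u : ℝ → EReal) (hu : IsUtilityFun u) (hunb : UnboundedFun u)
    (husc : UpperSemicontinuous u) (hnss : NegStarShapedPos u)
    (R : (Ω → ℝ) → EReal) (hR : IsRisk μ R)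
    (hcc : CashConvex μ R) (hlf : LowerFatou μ R)
    (halg : ⊥ < ALG u) (hnsll : ¬SensLLRisk μ R) :
    ∃ (d : ℕ), 0 < d ∧ ∃ M : MarketModel μ d, ∀ w : ℝ, 0 < w →
      ∃ θ : ℕ → Fin (d + 1) → ℝ,
        (∀ n, cost M (θ n) = w ∧
          R (payoff M (θ n)) ≤ R (fun _ => w * (1 + M.r))) ∧
        Tendsto (fun n => expEU μ u (payoff M (θ n))) atTop (nhds (⨆ y : ℝ, u y)) := by
  classical
  -- the supremum of u is ⊤
  have husup : (⨆ y : ℝ, u y) = ⊤ := usup_eq_top u hu hunb halg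
  -- pick α < 0 below ALG u
  obtain ⟨α₀, hα₀b, hα₀⟩ := EReal.exists_between_coe_real halg
  set α := min α₀ (-1) with hαdef
  have hαneg : α < 0 := lt_of_le_of_lt (min_le_right _ _) (by norm_num)
  have hα : (α : EReal) < ALG u :=
    lt_of_le_of_lt (EReal.coe_le_coe_iff.2 (min_le_left α₀ (-1))) hα₀
  have hfreq : ∃ᶠ y in (atTop : Filter ℝ), (α : EReal) < u (-y) / u y :=
    Filter.frequently_lt_of_lt_limsup (by isBoundedDefault) hα
  have hfa : ∀ b : ℝ, ∃ y, b ≤ y ∧ (α : EReal) < u (-y) / u y := by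
    intro b
    obtain ⟨y, hy1, hy2⟩ := (Filter.frequently_atTop.1 hfreq) b
    exact ⟨y, hy1, hy2⟩
  obtain ⟨y₀, hy₀⟩ : ∃ y₀ : ℝ, 0 < u y₀ := by
    by_contra hno
    push_neg at hno
    have h1 : (⨆ y : ℝ, u y) ≤ 0 := iSup_le hno
    rw [husup] at h1
    exact absurd h1 (by simp)
  -- the random variable W
  obtain ⟨W, t, hWmeas, hWint, ht, hWneg, hWpos, hWR⟩ := exists_W hatomless hR hnsll
  obtain ⟨δ, hδ, hβ₀⟩ := exists_pos_level hWpos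
  set m := max 1 δ with hmdef
  have hm0 : (0:ℝ) < m := lt_of_lt_of_le one_pos (le_max_left _ _)
  have hδm : δ ≤ m := le_max_right _ _
  set β₀ := μ {ω | t + δ < W ω} with hβ₀def
  have hβ₀top : β₀ ≠ ⊤ := measure_ne_top μ _
  set b₀ := β₀.toReal with hb₀def
  have hb₀pos : 0 < b₀ := ENNReal.toReal_pos hβ₀.ne' hβ₀top
  set γ' := δ * b₀ / (2 * m * (-α)) with hγdef
  have hγpos : 0 < γ' := by
    apply div_pos (by positivity)
    have : 0 < -α := by linarith
    positivity
  obtain ⟨C, hCsub, hCm, hC0, hCe⟩ := atomless_small hatomless {ω | W ω < t}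
    (measurableSet_lt hWmeas measurable_const) hWneg.ne' (measure_ne_top μ _)
    (ENNReal.ofReal_pos.2 hγpos)
  -- the risky payoff
  set V : Ω → ℝ := fun ω => max (W ω - t) (C.indicator (fun _ => (-m)) ω) with hVdef
  have hVmeas : Measurable V :=
    (hWmeas.sub measurable_const).max (measurable_const.indicator hCm)
  have hVge : ∀ ω, W ω - t ≤ V ω := fun ω => le_max_left _ _
  have hVgeW : ∀ ω, W ω ≤ V ω := fun ω => le_trans (by linarith) (hVge ω)
  have hVonC : ∀ ω ∈ C, V ω < 0 := by
    intro ω hω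
    have h1 : W ω < t := hCsub hω
    rw [hVdef]
    simp only [Set.indicator_of_mem hω]
    apply max_lt (by linarith) (by linarith)
  have hVoffC : ∀ ω, ω ∉ C → 0 ≤ V ω := by
    intro ω hω
    rw [hVdef]
    simp only [Set.indicator_of_notMem hω]
    exact le_max_right _ _
  have hVm : ∀ ω, -m ≤ V ω := by
    intro ω
    by_cases hω : ω ∈ C
    · rw [hVdef]; simp only [Set.indicator_of_mem hω]; exact le_max_right _ _
    · linarith [hVoffC ω hω]
  have hVint : Integrable V μ := by
    have hmaj : Integrable (fun ω => |W ω - t| + m) μ :=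
      ((hWint.sub (integrable_const t)).abs).add (integrable_const m)
    apply Integrable.mono' hmaj hVmeas.aestronglyMeasurable
    filter_upwards with ω
    rw [Real.norm_eq_abs]
    refine (abs_max_le_max_abs_abs).trans (max_le ?_ ?_)
    · have := abs_nonneg (W ω - t); linarith [le_abs_self (W ω - t), hm0]
    · have h1 : |C.indicator (fun _ => (-m)) ω| ≤ m := by
        by_cases hω : ω ∈ C
        · simp [Set.indicator_of_mem hω, abs_of_nonpos, hm0.le]
        · simp [Set.indicator_of_notMem hω, hm0.le]
      have := abs_nonneg (W ω - t); linarith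
  have hVneg : 0 < μ {ω | V ω < 0} := by
    apply lt_of_lt_of_le hC0 (measure_mono ?_)
    intro ω hω
    exact hVonC ω hω
  have hGsub : {ω | t + δ < W ω} ⊆ {ω | δ < V ω} := by
    intro ω hω
    simp only [Set.mem_setOf_eq] at hω ⊢
    have := hVge ω
    linarith
  have hμG : 0 < μ {ω | δ < V ω} := lt_of_lt_of_le hβ₀ (measure_mono hGsub)
  have hVRprop : ∀ L : ℝ, ∃ l', L ≤ l' ∧ 0 < l' ∧ R (scale l' V) ≤ 0 := by
    intro L
    obtain ⟨l', h1, h2, h3⟩ := hWR L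
    refine ⟨l', h1, h2, le_trans ?_ h3⟩
    apply hR.mono _ _ (hWint.const_mul l') (hVint.const_mul l')
    filter_upwards with ω
    show l' * W ω ≤ l' * V ω
    exact mul_le_mul_of_nonneg_left (hVgeW ω) h2.le
  -- the market
  set S : Fin 1 → Ω → ℝ := fun _ => fun ω => 1 + V ω with hSdef
  have hpayoff : ∀ (θ : Fin 2 → ℝ) (ω : Ω),
      mmPayoff 0 S θ ω = (θ 0 + θ 1) + θ 1 * V ω := by
    intro θ ω
    rw [mmPayoff]
    rw [Fin.sum_univ_one]
    rw [Fin.succ_zero_eq_one]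
    show θ 0 * (1 + 0) + θ 1 * (1 + V ω) = _
    ring
  have hSint : ∀ i : Fin 1, Integrable (S i) μ := fun i => (integrable_const 1).add hVint
  have hnonred : ∀ θ : Fin (1 + 1) → ℝ, (∀ᵐ ω ∂μ, mmPayoff 0 S θ ω = 0) → θ = 0 := by
    intro θ hθ
    obtain ⟨ω₁, hω₁G, hω₁⟩ := ae_exists_mem hθ hμG
    obtain ⟨ω₂, hω₂C, hω₂⟩ := ae_exists_mem hθ hC0
    rw [hpayoff] at hω₁ hω₂
    have hV₁ : δ < V ω₁ := hω₁G
    have hV₂ : V ω₂ < 0 := hVonC ω₂ hω₂C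
    have hθ1 : θ 1 = 0 := by
      by_contra h
      have h1 : θ 1 * V ω₁ = θ 1 * V ω₂ := by linarith
      have h2 : V ω₁ = V ω₂ := mul_left_cancel₀ h h1
      linarith
    have hθ0 : θ 0 = 0 := by
      rw [hθ1] at hω₁
      linarith
    funext i
    fin_cases i
    · simpa using hθ0
    · simpa using hθ1
  have hnoarb : ¬∃ θ : Fin (1 + 1) → ℝ, (∑ j, θ j) ≤ 0 ∧
      (∀ᵐ ω ∂μ, 0 ≤ mmPayoff 0 S θ ω) ∧ 0 < μ {ω | 0 < mmPayoff 0 S θ ω} := by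
    rintro ⟨θ, hsum, hae, hpos⟩
    rw [Fin.sum_univ_two] at hsum
    rcases lt_trichotomy (θ 1) 0 with h1 | h1 | h1
    · obtain ⟨ω₁, hω₁G, hω₁⟩ := ae_exists_mem hae hμG
      rw [hpayoff] at hω₁
      have hV₁ : δ < V ω₁ := hω₁G
      nlinarith
    · have hempty : {ω | 0 < mmPayoff 0 S θ ω} = ∅ := by
        ext ω
        simp only [Set.mem_setOf_eq, Set.mem_empty_iff_false, iff_false, not_lt]
        rw [hpayoff, h1]
        linarith
      rw [hempty] at hpos
      simp at hpos
    · obtain ⟨ω₂, hω₂C, hω₂⟩ := ae_exists_mem hae hC0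
      rw [hpayoff] at hω₂
      have hV₂ : V ω₂ < 0 := hVonC ω₂ hω₂C
      nlinarith
  set M : MarketModel μ 1 := ⟨0, by norm_num, S, hSint, hnonred, hnoarb⟩ with hMdef
  refine ⟨1, one_pos, M, ?_⟩
  intro w hw
  -- build the sequence of scales
  set ybase := max y₀ 1 with hybase
  choose f hf1 hf2 using hfa
  set yseq : ℕ → ℝ := fun n => f (max (n : ℝ) ybase) with hyseqdef
  have hyge : ∀ n : ℕ, max (n:ℝ) ybase ≤ yseq n := fun n => hf1 _
  have hyn : ∀ n : ℕ, (n:ℝ) ≤ yseq n := fun n => le_trans (le_max_left _ _) (hyge n)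
  have hy1 : ∀ n, (1:ℝ) ≤ yseq n := fun n =>
    le_trans (le_trans (le_max_right y₀ 1) (le_max_right _ ybase)) (hyge n)
  have hyy₀ : ∀ n, y₀ ≤ yseq n := fun n =>
    le_trans (le_trans (le_max_left y₀ 1) (le_max_right _ ybase)) (hyge n)
  have hypos : ∀ n, (0:ℝ) < yseq n := fun n => lt_of_lt_of_le one_pos (hy1 n)
  have huypos : ∀ n, 0 < u (yseq n) := fun n => lt_of_lt_of_le hy₀ (hu.mono (hyy₀ n))
  have hutop : ∀ n, u (yseq n) ≠ ⊤ := fun n => hu.ne_top _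
  have hubot : ∀ n, u (yseq n) ≠ ⊥ := fun n =>
    (lt_trans (by simp : (⊥:EReal) < 0) (huypos n)).ne'
  set aseq : ℕ → ℝ := fun n => (u (yseq n)).toReal with haseqdef
  have haeq : ∀ n, u (yseq n) = ((aseq n : ℝ) : EReal) := fun n =>
    (EReal.coe_toReal (hutop n) (hubot n)).symm
  have hapos : ∀ n, 0 < aseq n := by
    intro n
    have := huypos n
    rw [haeq n] at this
    exact_mod_cast this
  have hALGn : ∀ n, ((α * aseq n : ℝ) : EReal) ≤ u (-(yseq n)) := by
    intro n
    have h := (hf2 (max (n:ℝ) ybase)).le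
    rw [EReal.le_div_iff_mul_le (huypos n) (hutop n)] at h
    rw [haeq n] at h
    rw [EReal.coe_mul]
    exact h
  set lseq : ℕ → ℝ := fun n => yseq n / m with hlseqdef
  have hlpos : ∀ n, 0 < lseq n := fun n => div_pos (hypos n) hm0
  have hlm : ∀ n, lseq n * m = yseq n := by
    intro n
    show yseq n / m * m = yseq n
    field_simp
  -- the portfolios
  set θ : ℕ → Fin 2 → ℝ := fun n => ![w - lseq n, lseq n] with hθdef
  have hpay : ∀ n, payoff M (θ n) = fun ω => w + lseq n * V ω := by
    intro n
    funext ω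
    show mmPayoff 0 S (θ n) ω = _
    rw [hpayoff]
    show (w - lseq n) + lseq n + lseq n * V ω = _
    ring
  have hconst : (fun _ : Ω => w * (1 + M.r)) = (fun _ : Ω => w) := by
    funext ω
    show w * (1 + 0) = w
    ring
  refine ⟨θ, fun n => ⟨?_, ?_⟩, ?_⟩
  · show ∑ j, θ n j = w
    rw [Fin.sum_univ_two]
    show (w - lseq n) + lseq n = w
    ring
  · rw [hpay n, hconst]
    exact risk_bound hR hcc hVint hVRprop hw (hlpos n)
  -- expected utility convergence
  have hGm : MeasurableSet {ω | δ < V ω} := measurableSet_lt measurable_const hVmeas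
  set c₀ := δ * b₀ / (2 * m) with hc₀def
  have hc₀pos : 0 < c₀ := by positivity
  have hkey : ∀ n, ((c₀ * aseq n : ℝ) : EReal) ≤
      expEU μ u (fun ω => w + lseq n * V ω) := by
    intro n
    -- star-shapedness lower bound for gains
    have hss := hnss (lseq n * δ) (mul_nonneg (hlpos n).le hδ.le) (m / δ)
      (by rw [le_div_iff₀ hδ]; linarith)
    have harg : m / δ * (lseq n * δ) = yseq n := by
      have h1 : m / δ * (lseq n * δ) = lseq n * m := by
        field_simp
      rw [h1, hlm n]
    rw [harg] at hss
    have hx0 : (0 : EReal) ≤ u (lseq n * δ) := by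
      rw [← hu.norm]
      exact hu.mono (mul_nonneg (hlpos n).le hδ.le)
    have hxtop : u (lseq n * δ) ≠ ⊤ := hu.ne_top _
    have hxbot : u (lseq n * δ) ≠ ⊥ := by
      intro hb
      rw [hb] at hx0
      exact absurd hx0 (by simp)
    set xR := (u (lseq n * δ)).toReal with hxRdef
    have hxeq : u (lseq n * δ) = ((xR : ℝ) : EReal) := (EReal.coe_toReal hxtop hxbot).symm
    have hxaR : δ / m * aseq n ≤ xR := by
      have h1 : ((aseq n : ℝ) : EReal) ≤ (((m/δ) * xR : ℝ) : EReal) := by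
        rw [EReal.coe_mul, ← haeq n, ← hxeq]
        exact hss
      have h2 : aseq n ≤ (m/δ) * xR := by exact_mod_cast h1
      calc δ / m * aseq n ≤ δ / m * ((m/δ) * xR) :=
            mul_le_mul_of_nonneg_left h2 (by positivity)
        _ = xR := by field_simp
    -- lower bound for the positive part
    have hIplus : ENNReal.ofReal (δ / m * aseq n) * β₀ ≤
        ∫⁻ ω, posPart (u (w + lseq n * V ω)) ∂μ := by
      calc ENNReal.ofReal (δ / m * aseq n) * β₀
          ≤ ENNReal.ofReal (δ / m * aseq n) * μ {ω | δ < V ω} :=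
            mul_le_mul_right (measure_mono hGsub) _
        _ = ∫⁻ ω, {ω | δ < V ω}.indicator (fun _ => ENNReal.ofReal (δ / m * aseq n)) ω ∂μ :=
            (lintegral_indicator_const hGm _).symm
        _ ≤ ∫⁻ ω, posPart (u (w + lseq n * V ω)) ∂μ := by
            apply lintegral_mono
            intro ω
            by_cases hω : ω ∈ {ω | δ < V ω}
            · rw [Set.indicator_of_mem hω]
              apply ofReal_le_posPart _ (hu.ne_top _)
              have hVω : δ < V ω := hω
              have harg2 : lseq n * δ ≤ w + lseq n * V ω := by
                have h3 := mul_le_mul_of_nonneg_left hVω.le (hlpos n).le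
                linarith
              calc ((δ / m * aseq n : ℝ) : EReal) ≤ ((xR : ℝ) : EReal) := by exact_mod_cast hxaR
                _ = u (lseq n * δ) := hxeq.symm
                _ ≤ u (w + lseq n * V ω) := hu.mono harg2
            · rw [Set.indicator_of_notMem hω]
              exact zero_le
    -- upper bound for the negative part
    have hIminus : ∫⁻ ω, posPart (-(u (w + lseq n * V ω))) ∂μ ≤
        ENNReal.ofReal ((-α) * aseq n * γ') := by
      calc ∫⁻ ω, posPart (-(u (w + lseq n * V ω))) ∂μ
          ≤ ∫⁻ ω, C.indicator (fun _ => ENNReal.ofReal ((-α) * aseq n)) ω ∂μ := by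
            apply lintegral_mono
            intro ω
            by_cases hω : ω ∈ C
            · rw [Set.indicator_of_mem hω]
              apply posPart_le_ofReal ?_
                (mul_nonneg (by linarith : (0:ℝ) ≤ -α) (hapos n).le)
              have hP : -(yseq n) ≤ w + lseq n * V ω := by
                have h3 := mul_le_mul_of_nonneg_left (hVm ω) (hlpos n).le
                have h4 : lseq n * -m = -(yseq n) := by rw [mul_neg, hlm n]
                linarith
              have h2 : ((α * aseq n : ℝ) : EReal) ≤ u (w + lseq n * V ω) :=
                le_trans (hALGn n) (hu.mono hP)
              have h3 : -(u (w + lseq n * V ω)) ≤ -((α * aseq n : ℝ) : EReal) :=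
                EReal.neg_le_neg_iff.2 h2
              calc -(u (w + lseq n * V ω)) ≤ -((α * aseq n : ℝ) : EReal) := h3
                _ = (((-α) * aseq n : ℝ) : EReal) := by
                    rw [← EReal.coe_neg]
                    norm_num
            · rw [Set.indicator_of_notMem hω]
              have hP0 : (0:ℝ) ≤ w + lseq n * V ω := by
                have h3 := mul_nonneg (hlpos n).le (hVoffC ω hω)
                linarith
              have h2 : (0 : EReal) ≤ u (w + lseq n * V ω) := by
                rw [← hu.norm]
                exact hu.mono hP0
              have h3 : -(u (w + lseq n * V ω)) ≤ 0 := by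
                have h4 := EReal.neg_le_neg_iff.2 h2
                simpa using h4
              exact le_of_eq (posPart_eq_zero_of_nonpos h3)
        _ = ENNReal.ofReal ((-α) * aseq n) * μ C := lintegral_indicator_const hCm _
        _ ≤ ENNReal.ofReal ((-α) * aseq n) * ENNReal.ofReal γ' :=
            mul_le_mul_right hCe.le _
        _ = ENNReal.ofReal ((-α) * aseq n * γ') :=
            (ENNReal.ofReal_mul (mul_nonneg (by linarith : (0:ℝ) ≤ -α) (hapos n).le)).symm
    -- combine
    have hsub : ((ENNReal.ofReal (δ / m * aseq n) * β₀ : ℝ≥0∞) : EReal) -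
        ((ENNReal.ofReal ((-α) * aseq n * γ') : ℝ≥0∞) : EReal) ≤
        expEU μ u (fun ω => w + lseq n * V ω) := by
      rw [expEU]
      exact EReal.sub_le_sub (EReal.coe_ennreal_le_coe_ennreal_iff.2 hIplus)
        (EReal.coe_ennreal_le_coe_ennreal_iff.2 hIminus)
    refine le_trans ?_ hsub
    have hβ₀r : β₀ = ENNReal.ofReal b₀ := (ENNReal.ofReal_toReal hβ₀top).symm
    have hdm : (0:ℝ) ≤ δ / m * aseq n := mul_nonneg (div_nonneg hδ.le hm0.le) (hapos n).le
    rw [hβ₀r, ← ENNReal.ofReal_mul hdm]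
    rw [EReal.coe_ennreal_ofReal, EReal.coe_ennreal_ofReal]
    rw [max_eq_left (mul_nonneg hdm hb₀pos.le),
      max_eq_left (mul_nonneg (mul_nonneg (by linarith : (0:ℝ) ≤ -α) (hapos n).le) hγpos.le)]
    rw [← EReal.coe_sub]
    apply EReal.coe_le_coe_iff.2
    have hα0 : (α : ℝ) ≠ 0 := ne_of_lt hαneg
    have hγα : (-α) * γ' = δ * b₀ / (2 * m) := by
      rw [hγdef]
      field_simp
    have h5 : (-α) * aseq n * γ' = c₀ * aseq n := by
      calc (-α) * aseq n * γ' = aseq n * ((-α) * γ') := by ring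
        _ = aseq n * (δ * b₀ / (2 * m)) := by rw [hγα]
        _ = c₀ * aseq n := by rw [hc₀def]; ring
    have h6 : δ / m * aseq n * b₀ = 2 * (c₀ * aseq n) := by
      rw [hc₀def]
      field_simp
    linarith
  -- a_n tends to infinity
  have haseq : Tendsto aseq atTop atTop := by
    rw [tendsto_atTop]
    intro M'
    obtain ⟨yy, hyy⟩ : ∃ y : ℝ, (M' : EReal) < u y := by
      by_contra hno
      push_neg at hno
      have h1 : (⨆ y : ℝ, u y) ≤ (M' : EReal) := iSup_le hno
      rw [husup] at h1
      exact absurd h1 (by simp)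
    rw [eventually_atTop]
    refine ⟨⌈yy⌉₊, fun n hn => ?_⟩
    have h1 : yy ≤ yseq n := by
      refine le_trans (Nat.le_ceil yy) (le_trans ?_ (hyn n))
      exact_mod_cast hn
    have h2 : (M' : EReal) < u (yseq n) := lt_of_lt_of_le hyy (hu.mono h1)
    rw [haeq n] at h2
    exact (EReal.coe_lt_coe_iff.1 h2).le
  -- conclude
  have hpayeq : (fun n => expEU μ u (payoff M (θ n))) =
      fun n => expEU μ u (fun ω => w + lseq n * V ω) := by
    funext n
    rw [hpay n]
  rw [hpayeq, husup, EReal.tendsto_nhds_top_iff_real]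
  intro x
  have htend : Tendsto (fun n => c₀ * aseq n) atTop atTop :=
    haseq.const_mul_atTop hc₀pos
  filter_upwards [htend.eventually_gt_atTop x] with n hn
  exact lt_of_lt_of_le (EReal.coe_lt_coe_iff.2 hn) (hkey n)

end URPaper
end

section
/- Let (Ω, F, ℙ) be an atomless probability space and let X, Y be integrable real-valued random variables with ℙ[X < 0] > 0 and ℙ[Y < 0] > 0. Then there exists an integrable random variable Z such that Z ≥ X ℙ-a.s., ℙ[Z ≤ x] ≤ ℙ[Y ≤ x] for every x ∈ ℝ (i.e. Z first-order stochastically dominates Y), and ℙ[Z < 0] > 0. -/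
open MeasureTheory Filter
open scoped ENNReal

namespace URPaper

variable {Ω : Type*} [MeasurableSpace Ω]

/-- Auxiliary: an atomless finite measure admits subsets of arbitrarily small
positive measure inside any set of positive measure. -/
lemma exists_small_subset {Ω : Type*} [MeasurableSpace Ω] (μ : Measure Ω) [IsFiniteMeasure μ]
    (h : Atomless μ) {s : Set Ω} (hs : MeasurableSet s) (hs0 : 0 < μ s)
    {ε : ℝ≥0∞} (hε : 0 < ε) (hεtop : ε ≠ ⊤) :
    ∃ t, t ⊆ s ∧ MeasurableSet t ∧ 0 < μ t ∧ μ t < ε := by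
  by_contra hcon
  push_neg at hcon
  -- hcon : ∀ t, t ⊆ s → MeasurableSet t → 0 < μ t → ε ≤ μ t
  have step : ∀ u : {u : Set Ω // u ⊆ s ∧ MeasurableSet u ∧ 0 < μ u},
      ∃ v : Set Ω, v ⊆ u.1 ∧ MeasurableSet v ∧ 0 < μ v ∧ μ v < μ u.1 :=
    fun u => h u.1 u.2.2.1 u.2.2.2.ne'
  let next : {u : Set Ω // u ⊆ s ∧ MeasurableSet u ∧ 0 < μ u} →
      {u : Set Ω // u ⊆ s ∧ MeasurableSet u ∧ 0 < μ u} := fun u =>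
    ⟨u.1 \ (step u).choose,
      fun ω hω => u.2.1 hω.1,
      u.2.2.1.diff (step u).choose_spec.2.1, by
        have hspec := (step u).choose_spec
        rw [measure_diff hspec.1 hspec.2.1.nullMeasurableSet (measure_ne_top μ _)]
        exact tsub_pos_iff_lt.2 hspec.2.2.2⟩
  let f : ℕ → {u : Set Ω // u ⊆ s ∧ MeasurableSet u ∧ 0 < μ u} :=
    fun n => next^[n] ⟨s, le_refl s, hs, hs0⟩
  have hεle : ∀ n, ε ≤ μ (f n).1 := fun n => hcon _ (f n).2.1 (f n).2.2.1 (f n).2.2.2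
  have hbound : ∀ n : ℕ, μ (f n).1 + n * ε ≤ μ s := by
    intro n
    induction n with
    | zero => simp [f]
    | succ n ih =>
        have hfs : f (n + 1) = next (f n) := Function.iterate_succ_apply' _ _ _
        have hspec := (step (f n)).choose_spec
        have h1 : μ (f (n + 1)).1 = μ (f n).1 - μ (step (f n)).choose := by
          rw [hfs]
          exact measure_diff hspec.1 hspec.2.1.nullMeasurableSet (measure_ne_top μ _)
        have h2 : ε ≤ μ (step (f n)).choose :=
          hcon _ (fun ω hω => (f n).2.1 (hspec.1 hω)) hspec.2.1 hspec.2.2.1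
        have h3 : μ (f (n + 1)).1 ≤ μ (f n).1 - ε := by
          rw [h1]; exact tsub_le_tsub_left h2 _
        calc μ (f (n + 1)).1 + (n + 1 : ℕ) * ε
            ≤ (μ (f n).1 - ε) + (n + 1 : ℕ) * ε := add_le_add_left h3 _
          _ = ((μ (f n).1 - ε) + ε) + n * ε := by
              push_cast
              ring
          _ = μ (f n).1 + n * ε := by rw [tsub_add_cancel_of_le (hεle n)]
          _ ≤ μ s := ih
  -- contradiction: n * ε ≤ μ s for all n, but ε > 0 and μ s < ⊤
  obtain ⟨n, hn⟩ := ENNReal.exists_nat_gt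
    (show μ s / ε ≠ ⊤ from (ENNReal.div_lt_top (measure_ne_top μ s) hε.ne').ne)
  have hlt : μ s < n * ε := by
    rw [ENNReal.div_lt_iff (Or.inl hε.ne') (Or.inl hεtop)] at hn
    exact hn
  have : (n : ℝ≥0∞) * ε ≤ μ s := le_trans (le_add_self) (hbound n)
  exact absurd this (not_le.2 hlt)

/-- on an atomless probability space, given integrable `X`, `Y` with
`ℙ[X<0]>0` and `ℙ[Y<0]>0`, there is an integrable `Z ≥ X` a.s. that first-order
stochastically dominates `Y` and satisfies `ℙ[Z<0]>0`. -/
theorem stmt18 {Ω : Type*} [MeasurableSpace Ω] (μ : Measure Ω) [IsProbabilityMeasure μ]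
    (hatomless : Atomless μ)
    (X Y : Ω → ℝ) (hX : Integrable X μ) (hY : Integrable Y μ)
    (hX0 : 0 < μ {ω | X ω < 0}) (hY0 : 0 < μ {ω | Y ω < 0}) :
    ∃ Z : Ω → ℝ, Integrable Z μ ∧ (∀ᵐ ω ∂μ, X ω ≤ Z ω) ∧
      (∀ x : ℝ, μ {ω | Z ω ≤ x} ≤ μ {ω | Y ω ≤ x}) ∧ 0 < μ {ω | Z ω < 0} := by
  classical
  -- measurable modifications
  obtain ⟨X', hX'm, hXX'⟩ : ∃ X' : Ω → ℝ, Measurable X' ∧ X =ᵐ[μ] X' :=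
    ⟨hX.aemeasurable.mk X, hX.aemeasurable.measurable_mk, hX.aemeasurable.ae_eq_mk⟩
  obtain ⟨Y', hY'm, hYY'⟩ : ∃ Y' : Ω → ℝ, Measurable Y' ∧ Y =ᵐ[μ] Y' :=
    ⟨hY.aemeasurable.mk Y, hY.aemeasurable.measurable_mk, hY.aemeasurable.ae_eq_mk⟩
  have meas_eq : ∀ (f g : Ω → ℝ), f =ᵐ[μ] g → ∀ P : ℝ → Prop,
      μ {ω | P (f ω)} = μ {ω | P (g ω)} := by
    intro f g hfg P
    apply measure_congr
    filter_upwards [hfg] with ω h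
    change P (f ω) = P (g ω)
    rw [h]
  have hX0' : 0 < μ {ω | X' ω < 0} := by
    rw [← meas_eq X X' hXX' (fun t => t < 0)]; exact hX0
  have hY0' : 0 < μ {ω | Y' ω < 0} := by
    rw [← meas_eq Y Y' hYY' (fun t => t < 0)]; exact hY0
  -- find a > 0 with μ {X' ≤ -a} > 0
  have key : ∀ W : Ω → ℝ, 0 < μ {ω | W ω < 0} →
      ∃ a : ℝ, 0 < a ∧ 0 < μ {ω | W ω ≤ -a} := by
    intro W hW
    by_contra hcon
    push_neg at hcon
    have hnull : μ {ω | W ω < 0} = 0 := by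
      have hsub : {ω | W ω < 0} ⊆ ⋃ n : ℕ, {ω | W ω ≤ -(1 / (n + 1 : ℝ))} := by
        intro ω hω
        simp only [Set.mem_setOf_eq] at hω
        obtain ⟨n, hn⟩ := exists_nat_one_div_lt (ε := -W ω) (neg_pos.mpr hω)
        exact Set.mem_iUnion.2 ⟨n, by simp only [Set.mem_setOf_eq]; linarith⟩
      refine measure_mono_null hsub (measure_iUnion_null fun n => ?_)
      have := hcon (1 / (n + 1 : ℝ)) (by positivity)
      exact le_antisymm this zero_le
    exact absurd hnull hW.ne'
  obtain ⟨a, ha0, haμ⟩ := key X' hX0'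
  obtain ⟨b, hb0, hbμ⟩ := key Y' hY0'
  -- find N with μ ({X' ≤ -a} ∩ {Y' ≤ N}) > 0
  obtain ⟨N, hNμ⟩ : ∃ N : ℕ, 0 < μ ({ω | X' ω ≤ -a} ∩ {ω | Y' ω ≤ (N : ℝ)}) := by
    by_contra hcon
    push_neg at hcon
    have hnull : μ {ω | X' ω ≤ -a} = 0 := by
      have hsub : {ω | X' ω ≤ -a} ⊆
          ⋃ n : ℕ, ({ω | X' ω ≤ -a} ∩ {ω | Y' ω ≤ (n : ℝ)}) := by
        intro ω hω
        obtain ⟨n, hn⟩ := exists_nat_ge (Y' ω)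
        exact Set.mem_iUnion.2 ⟨n, hω, hn⟩
      refine measure_mono_null hsub (measure_iUnion_null fun n => ?_)
      exact le_antisymm (hcon n) zero_le
    exact absurd hnull haμ.ne'
  set c : ℝ := min a b with hc
  have hc0 : 0 < c := lt_min ha0 hb0
  set A : Set Ω := {ω | X' ω ≤ -a} ∩ {ω | Y' ω ≤ (N : ℝ)} with hA
  have hAm : MeasurableSet A :=
    (measurableSet_le hX'm measurable_const).inter (measurableSet_le hY'm measurable_const)
  set D : Set Ω := {ω | Y' ω ≤ -b} with hD
  have hDm : MeasurableSet D := measurableSet_le hY'm measurable_const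
  set p : ℝ≥0∞ := μ D with hp
  have hp0 : 0 < p := hbμ
  have hptop : p ≠ ⊤ := measure_ne_top μ D
  have hp2 : 0 < p / 2 := ENNReal.div_pos hp0.ne' (by norm_num)
  have hp2top : p / 2 ≠ ⊤ := by
    exact (ENNReal.div_lt_top hptop (by norm_num)).ne
  obtain ⟨B, hBA, hBm, hB0, hBp2⟩ := exists_small_subset μ hatomless hAm hNμ hp2 hp2top
  set B' : Set Ω := D \ B with hB'
  have hB'm : MeasurableSet B' := hDm.diff hBm
  have hBB' : μ B ≤ μ B' := by
    have h1 : μ D - μ B ≤ μ B' := le_measure_diff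
    have h2 : p / 2 ≤ μ D - μ B := by
      apply (ENNReal.cancel_of_ne (measure_ne_top μ B)).le_tsub_of_add_le_left
      calc μ B + p / 2 ≤ p / 2 + p / 2 := add_le_add_left hBp2.le _
        _ = p := ENNReal.add_halves p
    exact le_trans (le_trans hBp2.le h2) h1
  -- the candidate
  set Z : Ω → ℝ := fun ω =>
    if ω ∈ B then -c else if ω ∈ B' then max (X' ω) N else max (X' ω) (Y' ω) with hZ
  have hZm : Measurable Z := by
    apply Measurable.ite hBm measurable_const
    exact Measurable.ite hB'm (hX'm.max measurable_const) (hX'm.max hY'm)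
  have hBX : ∀ ω ∈ B, X' ω ≤ -a := fun ω hω => (hBA hω).1
  have hBY : ∀ ω ∈ B, Y' ω ≤ (N : ℝ) := fun ω hω => (hBA hω).2
  have hca : c ≤ a := min_le_left _ _
  have hcb : c ≤ b := min_le_right _ _
  -- pointwise X' ≤ Z
  have hXZ' : ∀ ω, X' ω ≤ Z ω := by
    intro ω
    simp only [hZ]
    by_cases h1 : ω ∈ B
    · simp only [h1, if_true]; linarith [hBX ω h1]
    · simp only [h1, if_false]
      by_cases h2 : ω ∈ B'
      · simp [h2, le_max_left]
      · simp [h2, le_max_left]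
  refine ⟨Z, ?_, ?_, ?_, ?_⟩
  · -- integrable
    have hX'i : Integrable X' μ := hX.congr hXX'
    have hY'i : Integrable Y' μ := hY.congr hYY'
    refine Integrable.mono' ((hX'i.abs.add hY'i.abs).add (integrable_const (c + N)))
      hZm.aestronglyMeasurable ?_
    filter_upwards with ω
    simp only [Pi.add_apply]
    have hN0 : (0 : ℝ) ≤ N := Nat.cast_nonneg N
    have hXa := abs_nonneg (X' ω)
    have hYa := abs_nonneg (Y' ω)
    have hXs := le_abs_self (X' ω)
    have hYs := le_abs_self (Y' ω)
    have hXn := neg_abs_le (X' ω)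
    rw [Real.norm_eq_abs]
    simp only [hZ]
    by_cases h1 : ω ∈ B
    · simp only [h1, if_true, abs_neg, abs_of_pos hc0]; linarith
    · simp only [h1, if_false]
      by_cases h2 : ω ∈ B'
      · simp only [h2, if_true]
        rw [abs_le]
        constructor
        · have : (0:ℝ) ≤ max (X' ω) N := le_trans hN0 (le_max_right _ _)
          linarith
        · apply max_le <;> linarith
      · simp only [h2, if_false]
        rw [abs_le]
        constructor
        · have : -( |X' ω| ) ≤ max (X' ω) (Y' ω) := le_trans hXn (le_max_left _ _)
          linarith
        · apply max_le <;> linarith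
  · -- X ≤ Z a.s.
    filter_upwards [hXX'] with ω h
    rw [h]; exact hXZ' ω
  · -- stochastic dominance
    intro x
    have hright : μ {ω | Y' ω ≤ x} = μ {ω | Y ω ≤ x} :=
      (meas_eq Y Y' hYY' (fun t => t ≤ x)).symm
    rw [← hright]
    rcases lt_or_ge x (-c) with hx | hx
    · -- x < -c : {Z ≤ x} ⊆ {Y' ≤ x}
      apply measure_mono
      intro ω hω
      simp only [Set.mem_setOf_eq, hZ] at hω ⊢
      by_cases h1 : ω ∈ B
      · rw [if_pos h1] at hω; linarith
      · rw [if_neg h1] at hω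
        by_cases h2 : ω ∈ B'
        · rw [if_pos h2] at hω
          have : (0:ℝ) ≤ max (X' ω) N := le_trans (Nat.cast_nonneg N) (le_max_right _ _)
          linarith
        · rw [if_neg h2] at hω
          exact le_trans (le_max_right _ _) hω
    · rcases lt_or_ge x N with hxN | hxN
      · -- middle case
        have hB'sub : B' ⊆ {ω | Y' ω ≤ x} := by
          intro ω hω
          have : Y' ω ≤ -b := hω.1
          simp only [Set.mem_setOf_eq]; linarith
        have hsub : {ω | Z ω ≤ x} ⊆ B ∪ ({ω | Y' ω ≤ x} \ (B ∪ B')) := by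
          intro ω hω
          simp only [Set.mem_setOf_eq, hZ] at hω
          by_cases h1 : ω ∈ B
          · exact Or.inl h1
          · rw [if_neg h1] at hω
            by_cases h2 : ω ∈ B'
            · rw [if_pos h2] at hω
              exfalso
              have : (N : ℝ) ≤ max (X' ω) N := le_max_right _ _
              linarith
            · rw [if_neg h2] at hω
              refine Or.inr ⟨le_trans (le_max_right _ _) hω, ?_⟩
              simp [h1, h2]
        have hdisj : Disjoint B' ({ω | Y' ω ≤ x} \ (B ∪ B')) :=
          Set.disjoint_left.2 fun ω h1 h2 => h2.2 (Or.inr h1)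
        have hm2 : MeasurableSet ({ω | Y' ω ≤ x} \ (B ∪ B')) :=
          (measurableSet_le hY'm measurable_const).diff (hBm.union hB'm)
        calc μ {ω | Z ω ≤ x} ≤ μ (B ∪ ({ω | Y' ω ≤ x} \ (B ∪ B'))) := measure_mono hsub
          _ ≤ μ B + μ ({ω | Y' ω ≤ x} \ (B ∪ B')) := measure_union_le _ _
          _ ≤ μ B' + μ ({ω | Y' ω ≤ x} \ (B ∪ B')) := add_le_add_left hBB' _
          _ = μ (B' ∪ ({ω | Y' ω ≤ x} \ (B ∪ B'))) := (measure_union hdisj hm2).symm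
          _ ≤ μ {ω | Y' ω ≤ x} :=
              measure_mono (Set.union_subset hB'sub Set.diff_subset)
      · -- x ≥ N : {Z ≤ x} ⊆ {Y' ≤ x}
        apply measure_mono
        intro ω hω
        simp only [Set.mem_setOf_eq, hZ] at hω ⊢
        by_cases h1 : ω ∈ B
        · linarith [hBY ω h1]
        · rw [if_neg h1] at hω
          by_cases h2 : ω ∈ B'
          · have : Y' ω ≤ -b := h2.1
            linarith
          · rw [if_neg h2] at hω
            exact le_trans (le_max_right _ _) hω
  · -- P[Z < 0] > 0
    refine lt_of_lt_of_le hB0 (measure_mono ?_)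
    intro ω hω
    simp only [Set.mem_setOf_eq, hZ, if_pos hω]
    linarith

end URPaper
end

section
/- Let U be a utility functional and R a positively star-shaped risk functional. Suppose Y ∈ L¹ satisfies: ℙ[Y < 0] > 0; there exists a sequence μ_n ↑ ∞ with R(μ_n Y) ≤ 0 for all n; and for every c ∈ [0, U(∞)) there exists a sequence ν_n ↑ ∞ with U(ν_n Y) ≥ c for all n. Then ℙ[Y > 0] > 0, the one-asset market X := (Y) is arbitrage-free and non-redundant, and X admits (U,R)-arbitrage: there exists a sequence λ_n ↑ ∞ with U(λ_n Y) → U(∞) and R(λ_n Y) ≤ 0 for all n. -/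
open MeasureTheory Filter
open scoped ENNReal

namespace URPaper

variable {Ω : Type*} [MeasurableSpace Ω]

lemma exists_seq_rec {f : ℕ → ℝ → Prop} (h : ∀ n, ∀ b : ℝ, ∃ l, b < l ∧ f n l) :
    ∃ lam : ℕ → ℝ, StrictMono lam ∧ (∀ n : ℕ, (n : ℝ) < lam n) ∧ ∀ n, f n (lam n) := by
  choose g hg1 hg2 using h
  set lam : ℕ → ℝ := fun n : ℕ =>
    Nat.rec (motive := fun _ => ℝ) (g 0 0) (fun k ih => g (k + 1) (max ih ((k : ℝ) + 1))) n with hlam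
  have hstep : ∀ n, lam (n + 1) = g (n + 1) (max (lam n) ((n : ℝ) + 1)) := fun n => rfl
  have hmono : StrictMono lam := by
    apply strictMono_nat_of_lt_succ
    intro n
    rw [hstep]
    exact lt_of_le_of_lt (le_max_left _ _) (hg1 _ _)
  refine ⟨lam, hmono, ?_, ?_⟩
  · intro n
    cases n with
    | zero => simpa using (show (0:ℝ) < lam 0 from hg1 0 0)
    | succ k =>
        rw [hstep]
        push_cast
        exact lt_of_le_of_lt (le_max_right _ _) (hg1 _ _)
  · intro n
    cases n with
    | zero => exact hg2 0 0
    | succ k => rw [hstep]; exact hg2 _ _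

/-- a position `Y` with `ℙ[Y<0]>0` whose scalings have nonpositive risk
along a sequence `μ_n ↑ ∞` and whose utility along suitable scalings exceeds every
`c ∈ [0, U(∞))` satisfies `ℙ[Y>0]>0`, generates an arbitrage-free non-redundant
one-asset market, and this market admits `(U,R)`-arbitrage realized by a sequence
`λ_n ↑ ∞`. -/
theorem stmt19 {Ω : Type*} [MeasurableSpace Ω] (μ : Measure Ω) [IsProbabilityMeasure μ]
    (U R : (Ω → ℝ) → EReal) (hU : IsUtility μ U) (hR : IsRisk μ R)
    (hps : PosStarShaped μ R)
    (Y : Ω → ℝ) (hYint : Integrable Y μ) (hYneg : 0 < μ {ω | Y ω < 0})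
    (hRseq : ∃ m : ℕ → ℝ, Monotone m ∧ Tendsto m atTop atTop ∧
      ∀ n, R (scale (m n) Y) ≤ 0)
    (hUseq : ∀ c : EReal, 0 ≤ c → c < limConst U →
      ∃ v : ℕ → ℝ, Monotone v ∧ Tendsto v atTop atTop ∧
        ∀ n, c ≤ U (scale (v n) Y)) :
    0 < μ {ω | 0 < Y ω} ∧ IsMarket μ (fun _ : Fin 1 => Y) ∧
      ∃ lam : ℕ → ℝ, Monotone lam ∧ Tendsto lam atTop atTop ∧
        Tendsto (fun n => U (scale (lam n) Y)) atTop (nhds (limConst U)) ∧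
        ∀ n, R (scale (lam n) Y) ≤ 0 := by
  classical
  set L : EReal := limConst U with hLdef
  have h0int : Integrable (fun _ : Ω => (0 : ℝ)) μ := integrable_const 0
  have hL0 : (0 : EReal) < L := by
    have := hU.non_sat (fun _ => (0 : ℝ)) h0int
    rwa [hU.norm] at this
  have hUle : ∀ l : ℝ, U (scale l Y) ≤ L :=
    fun l => (hU.non_sat (scale l Y) (hYint.const_mul l)).le
  -- Part 1: positivity of the gain probability
  have hYpos : 0 < μ {ω | 0 < Y ω} := by
    by_contra hcon
    push_neg at hcon
    have hnull : μ {ω | 0 < Y ω} = 0 := le_antisymm hcon zero_le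
    have haeY : ∀ᵐ ω ∂μ, Y ω ≤ 0 := by
      rw [ae_iff]
      convert hnull using 2
      ext ω; simp [not_le]
    obtain ⟨c, hc0, hcL⟩ := exists_between hL0
    obtain ⟨v, -, hvtend, hvle⟩ := hUseq c hc0.le hcL
    obtain ⟨n, hn⟩ := (hvtend.eventually (eventually_gt_atTop (0 : ℝ))).exists
    have hae : ∀ᵐ ω ∂μ, scale (v n) Y ω ≤ (fun _ => (0 : ℝ)) ω := by
      filter_upwards [haeY] with ω hω
      have : v n * Y ω ≤ 0 := by nlinarith
      simpa [scale] using this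
    have hle0 : U (scale (v n) Y) ≤ 0 := by
      have := hU.mono (scale (v n) Y) (fun _ => (0 : ℝ)) (hYint.const_mul _) h0int hae
      rwa [hU.norm] at this
    exact absurd (lt_of_lt_of_le hc0 ((hvle n).trans hle0)) (lt_irrefl 0)
  -- negative part not a.e. zero, derived facts
  have hYneg' : ¬ (∀ᵐ ω ∂μ, 0 ≤ Y ω) := by
    intro h
    have : μ {ω | Y ω < 0} = 0 := by
      rw [ae_iff] at h
      convert h using 2
      ext ω; simp [not_le]
    exact absurd this hYneg.ne'
  have hYpos' : ¬ (∀ᵐ ω ∂μ, Y ω ≤ 0) := by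
    intro h
    have : μ {ω | 0 < Y ω} = 0 := by
      rw [ae_iff] at h
      convert h using 2
      ext ω; simp [not_lt]
    exact absurd this hYpos.ne'
  -- Market structure
  have hport : ∀ (π : Fin 1 → ℝ) (ω : Ω), port (fun _ : Fin 1 => Y) π ω = π 0 * Y ω := by
    intro π ω; simp [port]
  have hmkt : IsMarket μ (fun _ : Fin 1 => Y) := by
    refine ⟨fun _ => hYint, ?_, ?_⟩
    · intro π hπ
      by_contra hne
      have hπ0 : π 0 ≠ 0 := by
        intro h0
        apply hne
        funext i
        have : i = 0 := Subsingleton.elim i 0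
        rw [this, h0]; rfl
      have : ∀ᵐ ω ∂μ, 0 ≤ Y ω := by
        filter_upwards [hπ] with ω hω
        rw [hport] at hω
        have : Y ω = 0 := by
          rcases mul_eq_zero.mp hω with h | h
          · exact absurd h hπ0
          · exact h
        exact this.ge
      exact hYneg' this
    · rintro ⟨π, hpos, hgt⟩
      rcases lt_trichotomy (π 0) 0 with hlt | heq | hgt0
      · apply hYpos'
        filter_upwards [hpos] with ω hω
        rw [hport] at hω
        nlinarith
      · have : {ω | 0 < port (fun _ : Fin 1 => Y) π ω} = ∅ := by
          ext ω; simp [hport, heq]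
        rw [this] at hgt
        simp at hgt
      · apply hYneg'
        filter_upwards [hpos] with ω hω
        rw [hport] at hω
        nlinarith
  -- Risk of every positive scaling is nonpositive
  obtain ⟨m, -, hmtend, hmle⟩ := hRseq
  have hRle : ∀ l : ℝ, 0 < l → R (scale l Y) ≤ 0 := by
    intro l hl
    obtain ⟨n, hn⟩ := (hmtend.eventually (eventually_gt_atTop l)).exists
    have hl1 : 1 < m n / l := (one_lt_div hl).mpr hn
    have hscale : scale (m n / l) (scale l Y) = scale (m n) Y := by
      funext ω
      simp only [scale]
      rw [← mul_assoc, div_mul_cancel₀ _ (ne_of_gt hl)]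
    have h1 := hps (scale l Y) (hYint.const_mul l) (m n / l) hl1
    rw [hscale] at h1
    by_contra hcon
    push_neg at hcon
    have hpos' : (0 : EReal) < ((m n / l : ℝ) : EReal) * R (scale l Y) :=
      EReal.mul_pos (by exact_mod_cast lt_trans zero_lt_one hl1) hcon
    exact absurd (lt_of_lt_of_le hpos' (h1.trans (hmle n))) (lt_irrefl 0)
  -- approximating sequence of utility levels
  have hcseq : ∃ cs : ℕ → EReal, (∀ n, 0 ≤ cs n) ∧ (∀ n, cs n < L) ∧
      Tendsto cs atTop (nhds L) := by
    by_cases hTop : L = ⊤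
    · refine ⟨fun n => ((n : ℝ) : EReal), fun n => EReal.coe_nonneg.mpr (Nat.cast_nonneg n),
        fun n => hTop ▸ (EReal.coe_lt_top _), ?_⟩
      rw [hTop, EReal.tendsto_nhds_top_iff_real]
      intro x
      filter_upwards [eventually_gt_atTop ⌈x⌉₊] with n hn
      exact_mod_cast lt_of_le_of_lt (Nat.le_ceil x) (by exact_mod_cast hn)
    · have hBot : L ≠ ⊥ := ne_of_gt (lt_trans (by simp) hL0)
      set r : ℝ := L.toReal with hrdef
      have hrL : (r : EReal) = L := EReal.coe_toReal hTop hBot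
      have hr0 : 0 < r := by
        rw [← EReal.coe_lt_coe_iff, hrL]
        exact_mod_cast hL0
      refine ⟨fun n => ((r - r / (n + 1) : ℝ) : EReal), ?_, ?_, ?_⟩
      · intro n
        have h1 : r / ((n : ℝ) + 1) ≤ r := by
          apply div_le_self hr0.le
          exact le_add_of_nonneg_left (Nat.cast_nonneg n)
        exact EReal.coe_nonneg.mpr (sub_nonneg.mpr h1)
      · intro n
        rw [← hrL]
        have : r / ((n : ℝ) + 1) > 0 := div_pos hr0 (by positivity)
        exact EReal.coe_lt_coe_iff.mpr (sub_lt_self r this)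
      · rw [← hrL]
        rw [EReal.tendsto_coe]
        have h1 : Tendsto (fun n : ℕ => (n : ℝ) + 1) atTop atTop :=
          tendsto_atTop_add_const_right _ 1 tendsto_natCast_atTop_atTop
        have : Tendsto (fun n : ℕ => r / ((n : ℝ) + 1)) atTop (nhds 0) :=
          tendsto_const_nhds.div_atTop h1
        simpa using (tendsto_const_nhds.sub this)
  obtain ⟨cs, hcs0, hcsL, hcstend⟩ := hcseq
  -- build the sequence lam
  have hex : ∀ n : ℕ, ∀ b : ℝ, ∃ l : ℝ, b < l ∧ cs n ≤ U (scale l Y) := by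
    intro n b
    obtain ⟨v, -, hvtend, hvle⟩ := hUseq (cs n) (hcs0 n) (hcsL n)
    obtain ⟨k, hk⟩ := (hvtend.eventually (eventually_gt_atTop b)).exists
    exact ⟨v k, hk, hvle k⟩
  obtain ⟨lam, hsm, hlt, hprop⟩ := exists_seq_rec hex
  refine ⟨hYpos, hmkt, lam, hsm.monotone, ?_, ?_, ?_⟩
  · exact tendsto_atTop_mono (fun n => (hlt n).le) tendsto_natCast_atTop_atTop
  · exact tendsto_of_tendsto_of_tendsto_of_le_of_le hcstend tendsto_const_nhds
      (fun n => hprop n) (fun n => hUle (lam n))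
  · intro n
    exact hRle (lam n) (lt_of_le_of_lt (Nat.cast_nonneg n) (hlt n))


end URPaper
end
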